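/- arXiv:1604.06152 — 3 statements merged into one kernel-verified Lean document; each statement's English description precedes it below -/
import Mathlib

section
/- Let A be an n×n nonsingular M-matrix and let α, β > 0. If Z_{α,B̄} and Z_{β,B̄} are independent, then Z_{α,β̄} + Z_{β,B̄} has the same distribution as Z_{α+β,B̄}; equivalently, for every k ∈ ℕ^n, P(Z_{α+β,B̄} = k) = Σ_{k'+k''=k} P(Z_{α,B̄} = k') P(Z_{β,B̄} = k''), where the sum is over all pairs k', k'' ∈ ℕ^n with k' + k'' = k componentwise. -/
open MeasureTheory ProbabilityTheory Matrix

noncomputable section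

/-- Number of cycles of a permutation, counting fixed points as cycles. -/
def numCycles {β : Type*} [Fintype β] [DecidableEq β] (π : Equiv.Perm β) : ℕ :=
  π.cycleType.card + (Finset.univ.filter fun i => π i = i).card

/-- The `α`-permanent `|M|_α = Σ_π α^{c(π)} Π_i M_{i,π(i)}`. -/
def aperm {β : Type*} [Fintype β] [DecidableEq β] (α : ℝ) (M : Matrix β β ℝ) : ℝ :=
  ∑ π : Equiv.Perm β, α ^ numCycles π * ∏ i, M i (π i)

/-- The `α`-permanent `|C(k)|_α` of the `|k| × |k|` matrix `C(k)` whose entry at `(p,q)`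
is `C i_p i_q`, where row/column indices are grouped into blocks of sizes `k 1, …, k n`.
We index the rows and columns by the type `Σ i, Fin (k i)`; since the `α`-permanent is
invariant under simultaneous relabeling of rows and columns, this is the same number. -/
def apermK {n : ℕ} (α : ℝ) (C : Matrix (Fin n) (Fin n) ℝ) (k : Fin n → ℕ) : ℝ :=
  aperm α (Matrix.of fun p q : Σ i : Fin n, Fin (k i) => C p.1 q.1)

/-- A nonsingular M-matrix: nonpositive off-diagonal entries, invertible,
with entrywise nonnegative inverse. -/
def IsNonsingMMatrix {n : ℕ} (A : Matrix (Fin n) (Fin n) ℝ) : Prop :=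
  (∀ i j, i ≠ j → A i j ≤ 0) ∧ IsUnit A.det ∧ ∀ i j, 0 ≤ A⁻¹ i j

/-- `Ā = D_A⁻¹ A`. -/
def Abar {n : ℕ} (A : Matrix (Fin n) (Fin n) ℝ) : Matrix (Fin n) (Fin n) ℝ :=
  Matrix.of fun i j => A i j / A i i

/-- `B̄ = D_A⁻¹ B`, where `A = D_A - B` with `B ≥ 0` having zero diagonal. -/
def Bbar {n : ℕ} (A : Matrix (Fin n) (Fin n) ℝ) : Matrix (Fin n) (Fin n) ℝ :=
  Matrix.of fun i j => if i = j then 0 else -(A i j) / A i i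

/-- The probability mass function of `Z_{α,B̄}`:
`P(Z = k) = det(Ā)^α |B̄(k)|_α / Π_i k_i!`. -/
def Zpmf {n : ℕ} (α : ℝ) (A : Matrix (Fin n) (Fin n) ℝ) (k : Fin n → ℕ) : ℝ :=
  (Abar A).det ^ α * apermK α (Bbar A) k / ∏ i, (Nat.factorial (k i) : ℝ)

/-- `X` is an `α`-permanental random vector with kernel `R`:
`E(e^{-Σ s_i X_i}) = det(I + R S)^{-α}` for all `s ≥ 0`, `S = diag(s)`. -/
def IsPermanental {n : ℕ} {Ω : Type*} [MeasurableSpace Ω] (μ : Measure Ω)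
    (α : ℝ) (R : Matrix (Fin n) (Fin n) ℝ) (X : Ω → Fin n → ℝ) : Prop :=
  Measurable X ∧ (∀ ω i, 0 ≤ X ω i) ∧
    ∀ s : Fin n → ℝ, (∀ i, 0 ≤ s i) →
      ∫ ω, Real.exp (-∑ i, s i * X ω i) ∂μ = ((1 + R * Matrix.diagonal s).det) ^ (-α)

end

/-!
Expanding `(α + β) ^ c(π)` binomially over the cycles of `π`, each term of `|M|_{α+β}` becomes a
`π`-stable set `T` of indices together with the restrictions of `π` to `T` and to its complement,
and these pairs of restrictions run over all pairs of permutations of `T` and of `Tᶜ`. Hence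
`|M|_{α+β} = Σ_T |M_T|_α |M_{Tᶜ}|_β`. For the block matrix `B̄(k)` the summand only depends on the
number `m_i` of indices taken from each block, which yields the factor `∏ C(k_i, m_i)`; it cancels
against the factorials in `P(Z = k)`. Finally `det Ā > 0` for a nonsingular M-matrix, so the powers
`det(Ā)^α det(Ā)^β = det(Ā)^(α+β)` combine.
-/

open Equiv Equiv.Perm Finset

section Cycles

variable {γ : Type*} [Fintype γ] [DecidableEq γ]

instance (π : Perm γ) : DecidableRel (SameCycle.setoid π).r :=
  inferInstanceAs (DecidableRel π.SameCycle)

theorem numCycles_eq_card_quotient (π : Perm γ) :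
    numCycles π = Fintype.card (Quotient (SameCycle.setoid π)) := by
  -- a cycle class is either a fixed point or the support of a cycle factor
  let f : γ → π.cycleFactorsFinset ⊕ {x // π x = x} := fun x =>
    if h : π x = x then .inr ⟨x, h⟩
    else .inl ⟨π.cycleOf x, cycleOf_mem_cycleFactorsFinset_iff.2 (mem_support.2 h)⟩
  have hf : ∀ x y, π.SameCycle x y ↔ f x = f y := by
    intro x y
    by_cases hx : π x = x <;> by_cases hy : π y = y <;> simp only [f, hx, hy, dite_true, dite_false]
    · simp only [Sum.inr.injEq, Subtype.mk.injEq]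
      exact ⟨fun h => h.eq_of_left hx, fun h => h ▸ SameCycle.rfl⟩
    · exact iff_of_false (fun h => hy (h.apply_eq_self_iff.1 hx)) Sum.inr_ne_inl
    · exact iff_of_false (fun h => hx (h.apply_eq_self_iff.2 hy)) Sum.inl_ne_inr
    · simp only [Sum.inl.injEq, Subtype.mk.injEq]
      exact sameCycle_iff_cycleOf_eq_of_mem_support (mem_support.2 hx) (mem_support.2 hy)
  let e : Quotient (SameCycle.setoid π) ≃ π.cycleFactorsFinset ⊕ {x // π x = x} := by
    refine .ofBijective (Quotient.lift f fun x y h => (hf x y).1 h) ⟨?_, ?_⟩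
    · rintro ⟨x⟩ ⟨y⟩ h
      exact Quotient.sound ((hf x y).2 h)
    · rintro (⟨c, hc⟩ | ⟨x, hx⟩)
      · obtain ⟨a, ha⟩ := (mem_cycleFactorsFinset_iff.1 hc).1.nonempty_support
        have haπ : π a ≠ a := mem_support.1 (mem_cycleFactorsFinset_support_le hc ha)
        refine ⟨Quotient.mk _ a, ?_⟩
        simp only [Quotient.lift_mk, f, haπ, dite_false, cycle_is_cycleOf ha hc]
      · exact ⟨Quotient.mk _ x, by simp [f, hx]⟩
  rw [Fintype.card_congr e, Fintype.card_sum, Fintype.card_coe, Fintype.card_subtype, numCycles,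
    cycleType_def, Multiset.card_map]
  rfl

end Cycles

section StableFinset

variable {γ : Type*}

abbrev StableFinset (π : Perm γ) : Type _ := {T : Finset γ // ∀ x, π x ∈ T ↔ x ∈ T}

namespace StableFinset

variable {π : Perm γ}

abbrev restrict (T : StableFinset π) : Perm {x // x ∈ T.1} := π.subtypePerm T.2

abbrev restrictCompl (T : StableFinset π) : Perm {x // x ∉ T.1} :=
  π.subtypePerm fun x => not_congr (T.2 x)

theorem mem_of_sameCycle (T : StableFinset π) {x y : γ} (hxy : π.SameCycle x y)
    (hx : x ∈ T.1) : y ∈ T.1 := by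
  obtain ⟨i, rfl⟩ := hxy
  simpa [subtypePerm_zpow] using ((T.restrict ^ i) ⟨x, hx⟩).2

end StableFinset

variable [Fintype γ] [DecidableEq γ]

theorem numCycles_subtypePerm {π : Perm γ} {p : γ → Prop} [Fintype {x // p x}]
    (q : Quotient (SameCycle.setoid π) → Prop) [DecidablePred q]
    (hpq : ∀ x, p x ↔ q (Quotient.mk _ x)) (h : ∀ x, p (π x) ↔ p x) :
    numCycles (π.subtypePerm h) = #{c | q c} := by
  rw [numCycles_eq_card_quotient, ← Fintype.card_subtype]
  refine Fintype.card_congr (.ofBijective (Quotient.lift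
    (fun x => ⟨Quotient.mk _ x.1, (hpq _).1 x.2⟩) fun x y hxy =>
      Subtype.ext (Quotient.sound (sameCycle_subtypePerm.1 hxy))) ⟨?_, ?_⟩)
  · rintro ⟨x⟩ ⟨y⟩ hxy
    exact Quotient.sound (sameCycle_subtypePerm.2 (Quotient.exact (congrArg Subtype.val hxy)))
  · rintro ⟨⟨x⟩, hx⟩
    exact ⟨Quotient.mk _ ⟨x, (hpq x).2 hx⟩, rfl⟩

def finsetQuotientEquivStableFinset (π : Perm γ) :
    Finset (Quotient (SameCycle.setoid π)) ≃ StableFinset π where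
  toFun S := ⟨univ.filter fun x => Quotient.mk _ x ∈ S, fun x => by
    simp only [mem_filter, mem_univ, true_and,
      Quotient.sound (s := SameCycle.setoid π) (sameCycle_apply_left.2 SameCycle.rfl)]⟩
  invFun T := T.1.image (Quotient.mk _)
  left_inv S := by
    ext c
    induction c using Quotient.inductionOn
    simp only [mem_image, mem_filter, mem_univ, true_and]
    exact ⟨fun ⟨y, hy, hyx⟩ => hyx ▸ hy, fun h => ⟨_, h, rfl⟩⟩
  right_inv T := by
    ext x
    simp only [mem_filter, mem_univ, true_and, mem_image]
    exact ⟨fun ⟨y, hy, hyx⟩ => T.mem_of_sameCycle (Quotient.exact hyx) hy,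
      fun hx => ⟨x, hx, rfl⟩⟩

theorem sum_stableFinset_pow_mul_pow {R : Type*} [CommSemiring R] (π : Perm γ) (a b : R) :
    ∑ T : StableFinset π, a ^ numCycles T.restrict * b ^ numCycles T.restrictCompl =
      (a + b) ^ numCycles π := by
  rw [← (finsetQuotientEquivStableFinset π).sum_comp, numCycles_eq_card_quotient,
    ← card_univ, ← sum_pow_mul_eq_add_pow, powerset_univ]
  refine sum_congr rfl fun S _ => ?_
  dsimp only [StableFinset.restrict, StableFinset.restrictCompl]
  rw [numCycles_subtypePerm (p := (· ∈ _)) (· ∈ S)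
      (fun _ => by simp [finsetQuotientEquivStableFinset]),
    numCycles_subtypePerm (p := (· ∉ _)) (· ∉ S)
      (fun _ => by simp [finsetQuotientEquivStableFinset]),
    filter_not, filter_mem_eq_of_subset (subset_univ S), card_sdiff_of_subset (subset_univ S)]

end StableFinset

section AlphaPermanent

variable {γ : Type*} [Fintype γ] [DecidableEq γ]

def permPairEquivStableFinset :
    (Σ T : Finset γ, Perm {x // x ∈ T} × Perm {x // x ∉ T}) ≃ Σ π : Perm γ, StableFinset π where
  toFun s := ⟨Perm.subtypeCongr s.2.1 s.2.2, s.1, fun x => by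
    by_cases hx : x ∈ s.1
    · simp [subtypeCongr.left_apply _ _ hx, hx, (s.2.1 ⟨x, hx⟩).2]
    · simp [subtypeCongr.right_apply _ _ hx, hx, (s.2.2 ⟨x, hx⟩).2]⟩
  invFun s := ⟨s.2.1, s.2.restrict, s.2.restrictCompl⟩
  left_inv := by
    rintro ⟨T, σ, τ⟩
    refine congrArg (Sigma.mk T) (Prod.ext ?_ ?_) <;> ext x <;> simp
  right_inv s := by
    refine Sigma.subtype_ext ?_ rfl
    ext x
    by_cases hx : x ∈ s.2.1
    · simp [subtypeCongr.left_apply _ _ hx]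
    · simp [subtypeCongr.right_apply _ _ hx]

theorem aperm_add (a b : ℝ) (M : Matrix γ γ ℝ) :
    aperm (a + b) M = ∑ T : Finset γ,
      aperm a (M.submatrix ((↑) : {x // x ∈ T} → γ) (↑)) *
        aperm b (M.submatrix ((↑) : {x // x ∉ T} → γ) (↑)) := by
  have hsplit (π : Perm γ) (T : StableFinset π) :
      a ^ numCycles T.restrict * b ^ numCycles T.restrictCompl * ∏ x, M x (π x) =
        (a ^ numCycles T.restrict * ∏ x : {x // x ∈ T.1}, M x (T.restrict x)) *
          (b ^ numCycles T.restrictCompl * ∏ x : {x // x ∉ T.1}, M x (T.restrictCompl x)) := by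
    rw [← prod_mul_prod_compl T.1, prod_subtype T.1 (p := (· ∈ T.1)) (fun _ => Iff.rfl),
      prod_subtype T.1ᶜ (p := (· ∉ T.1)) (fun _ => mem_compl)]
    simp only [subtypePerm_apply]
    ring
  calc aperm (a + b) M
      = ∑ π : Perm γ, ∑ T : StableFinset π,
          a ^ numCycles T.restrict * b ^ numCycles T.restrictCompl * ∏ x, M x (π x) := by
        simp only [aperm, ← sum_stableFinset_pow_mul_pow, Finset.sum_mul]
    _ = ∑ s : Σ π : Perm γ, StableFinset π,
          a ^ numCycles s.2.restrict * b ^ numCycles s.2.restrictCompl * ∏ x, M x (s.1 x) :=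
        by rw [Fintype.sum_sigma]
    _ = ∑ s : Σ T : Finset γ, Perm {x // x ∈ T} × Perm {x // x ∉ T},
          (a ^ numCycles s.2.1 * ∏ x : {x // x ∈ s.1}, M x (s.2.1 x)) *
            (b ^ numCycles s.2.2 * ∏ x : {x // x ∉ s.1}, M x (s.2.2 x)) :=
        Fintype.sum_equiv permPairEquivStableFinset.symm _ _ fun s => hsplit s.1 s.2
    _ = _ := by
        simp only [Fintype.sum_sigma, Fintype.sum_prod_type, aperm, Finset.sum_mul_sum]
        rfl

end AlphaPermanent

section Reindex

variable {γ δ : Type*} [Fintype γ] [DecidableEq γ] [Fintype δ] [DecidableEq δ]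

theorem numCycles_permCongr (e : γ ≃ δ) (π : Perm γ) : numCycles (e.permCongr π) = numCycles π := by
  have hpow (i : ℤ) : e.permCongr π ^ i = e.permCongr (π ^ i) := (map_zpow e.permCongrHom π i).symm
  rw [numCycles_eq_card_quotient, numCycles_eq_card_quotient]
  refine (Fintype.card_congr (Quotient.congr e fun x y => ?_)).symm
  change (∃ i : ℤ, _) ↔ ∃ i : ℤ, _
  simp only [hpow, permCongr_apply, symm_apply_apply, e.apply_eq_iff_eq]

theorem aperm_submatrix_equiv_self (a : ℝ) (M : Matrix δ δ ℝ) (e : γ ≃ δ) :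
    aperm a (M.submatrix e e) = aperm a M := by
  refine Fintype.sum_equiv e.permCongr _ _ fun π => ?_
  rw [numCycles_permCongr]
  congr 1
  exact Fintype.prod_equiv e _ _ fun x => by simp

end Reindex

section BlockPermanent

noncomputable def piFinsetEquivFinsetSigma {ι : Type*} [Fintype ι] (α : ι → Type*) :
    (∀ i, Finset (α i)) ≃ Finset (Σ i, α i) where
  toFun g := univ.sigma g
  invFun T i := T.preimage (Sigma.mk i) sigma_mk_injective.injOn
  left_inv g := by ext; simp
  right_inv T := by ext ⟨i, y⟩; simp

theorem card_filter_card_eq_prod_choose {ι : Type*} [Fintype ι] [DecidableEq ι] {α : ι → Type*}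
    [∀ i, Fintype (α i)] (m : ι → ℕ) :
    #{g : ∀ i, Finset (α i) | (fun i => #(g i)) = m} = ∏ i, (Fintype.card (α i)).choose (m i) := by
  rw [← Fintype.card_subtype, Fintype.card_congr
    ((Equiv.subtypeEquivRight fun g => funext_iff).trans
      (Equiv.subtypePiEquivPi (p := fun i (s : Finset (α i)) => #s = m i))), Fintype.card_pi]
  exact prod_congr rfl fun i _ => Fintype.card_finset_len (m i)

variable {n : ℕ}

theorem aperm_submatrix_sigma_subtype (a : ℝ) (C : Matrix (Fin n) (Fin n) ℝ) {k : Fin n → ℕ}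
    (P : (Σ i, Fin (k i)) → Prop) [DecidablePred P] [Fintype {x // P x}] :
    aperm a ((C.submatrix Sigma.fst Sigma.fst).submatrix (Subtype.val : {x // P x} → _)
        Subtype.val) = apermK a C fun i => #{y | P ⟨i, y⟩} := by
  let e : (Σ i, Fin #{y | P ⟨i, y⟩}) ≃ {x // P x} :=
    (Equiv.sigmaCongrRight fun i => (Fintype.equivFinOfCardEq (Fintype.card_subtype _)).symm).trans
      { toFun := fun x => ⟨⟨x.1, x.2.1⟩, x.2.2⟩
        invFun := fun x => ⟨x.1.1, x.1.2, x.2⟩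
        left_inv := fun _ => rfl
        right_inv := fun _ => rfl }
  rw [← aperm_submatrix_equiv_self a _ e]
  rfl

theorem apermK_add (a b : ℝ) (C : Matrix (Fin n) (Fin n) ℝ) (k : Fin n → ℕ) :
    apermK (a + b) C k = ∑ m ∈ Iic k,
      (∏ i, ((k i).choose (m i) : ℝ)) * (apermK a C m * apermK b C (k - m)) := by
  set sizes : (∀ i, Finset (Fin (k i))) → Fin n → ℕ := fun g i => #(g i)
  have hterm (g : ∀ i, Finset (Fin (k i))) :
      aperm a ((C.submatrix Sigma.fst Sigma.fst).submatrix
          (Subtype.val : {x // x ∈ piFinsetEquivFinsetSigma _ g} → _) Subtype.val) *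
        aperm b ((C.submatrix Sigma.fst Sigma.fst).submatrix
          (Subtype.val : {x // x ∉ piFinsetEquivFinsetSigma _ g} → _) Subtype.val) =
      apermK a C (sizes g) * apermK b C (k - sizes g) := by
    rw [aperm_submatrix_sigma_subtype, aperm_submatrix_sigma_subtype]
    congr 2 <;> ext i <;>
      simp only [piFinsetEquivFinsetSigma, Equiv.coe_fn_mk, mem_sigma, mem_univ, true_and,
        filter_not, filter_mem_eq_of_subset (subset_univ _), card_sdiff_of_subset (subset_univ _),
        card_univ, Fintype.card_fin, Pi.sub_apply, sizes]
  have hmaps : ∀ g ∈ (univ : Finset (∀ i, Finset (Fin (k i)))), sizes g ∈ Iic k := fun g _ =>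
    mem_Iic.2 fun i => (card_le_univ _).trans_eq (Fintype.card_fin _)
  calc apermK (a + b) C k
      = ∑ g, apermK a C (sizes g) * apermK b C (k - sizes g) := by
        rw [show apermK (a + b) C k = aperm (a + b) (C.submatrix Sigma.fst Sigma.fst) from rfl,
          aperm_add, ← (piFinsetEquivFinsetSigma _).sum_comp]
        exact sum_congr rfl fun g _ => hterm g
    _ = ∑ m ∈ Iic k, ∑ g with sizes g = m, apermK a C (sizes g) * apermK b C (k - sizes g) :=
        (sum_fiberwise_of_maps_to hmaps _).symm
    _ = _ := sum_congr rfl fun m _ => by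
        rw [sum_congr rfl fun g hg => by rw [(mem_filter.1 hg).2], sum_const,
          card_filter_card_eq_prod_choose, nsmul_eq_mul]
        simp

end BlockPermanent

section NonnegInverse

variable {ι : Type*} [Fintype ι] [DecidableEq ι] {B N : Matrix ι ι ℝ}

theorem eq_zero_of_one_sub_smul_mulVec_eq_zero (hB : ∀ i j, 0 ≤ B i j) (hN : ∀ i j, 0 ≤ N i j)
    (hNB : N * (1 - B) = 1) {s : ℝ} (hs : s ∈ Set.Icc (0 : ℝ) 1) {x : ι → ℝ}
    (hx : (1 - s • B) *ᵥ x = 0) : x = 0 := by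
  -- `|x| ≤ B |x|` entrywise, so `|x| = N ((1 - B) |x|) ≤ 0`
  set y : ι → ℝ := fun i => |x i|
  have hxs : x = s • (B *ᵥ x) := by
    rwa [sub_mulVec, one_mulVec, smul_mulVec, sub_eq_zero] at hx
  have hy (i : ι) : y i ≤ (B *ᵥ y) i := calc
    y i = s * |(B *ᵥ x) i| := by
      rw [show y i = |x i| from rfl, hxs, Pi.smul_apply, smul_eq_mul, abs_mul, abs_of_nonneg hs.1,
        ← hxs]
    _ ≤ |(B *ᵥ x) i| := mul_le_of_le_one_left (abs_nonneg _) hs.2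
    _ ≤ (B *ᵥ y) i := (abs_sum_le_sum_abs _ _).trans_eq <|
      sum_congr rfl fun j _ => by rw [abs_mul, abs_of_nonneg (hB i j)]
  have hyN : y = N *ᵥ ((1 - B) *ᵥ y) := by rw [mulVec_mulVec, hNB, one_mulVec]
  funext i
  refine abs_nonpos_iff.1 ?_
  rw [show |x i| = y i from rfl, hyN]
  exact sum_nonpos fun j _ => mul_nonpos_of_nonneg_of_nonpos (hN i j)
    (by simpa [sub_mulVec] using hy j)

theorem det_one_sub_pos (hB : ∀ i j, 0 ≤ B i j) (hN : ∀ i j, 0 ≤ N i j) (hNB : N * (1 - B) = 1) :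
    0 < (1 - B).det := by
  -- `s ↦ det (1 - s • B)` is continuous, equals `1` at `0`, and never vanishes on `[0, 1]`
  have hne : ∀ s ∈ Set.Icc (0 : ℝ) 1, (1 - s • B).det ≠ 0 := fun s hs h0 => by
    obtain ⟨x, hx0, hx⟩ := exists_mulVec_eq_zero_iff.2 h0
    exact hx0 (eq_zero_of_one_sub_smul_mulVec_eq_zero hB hN hNB hs hx)
  have hcont : ContinuousOn (fun s : ℝ => (1 - s • B).det) (Set.Icc 0 1) :=
    (continuous_const.sub (continuous_id.smul continuous_const)).matrix_det.continuousOn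
  by_contra! hle
  obtain ⟨s, hs, h0⟩ := intermediate_value_Icc' zero_le_one hcont ⟨by simpa using hle, by simp⟩
  exact hne s hs h0

end NonnegInverse

namespace IsNonsingMMatrix

variable {n : ℕ} {A : Matrix (Fin n) (Fin n) ℝ}

theorem diag_pos (hA : IsNonsingMMatrix A) (i : Fin n) : 0 < A i i := by
  obtain ⟨hoff, hdet, hinv⟩ := hA
  -- row `i` of `A A⁻¹ = 1`: the off-diagonal terms are `≤ 0`, so `A i i * A⁻¹ i i ≥ 1`
  have hrow := congrFun (congrFun (mul_nonsing_inv A hdet) i) i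
  rw [Matrix.mul_apply, ← add_sum_erase _ _ (mem_univ i), one_apply_eq] at hrow
  have hoffsum : ∑ j ∈ univ.erase i, A i j * A⁻¹ j i ≤ 0 := sum_nonpos fun j hj =>
    mul_nonpos_of_nonpos_of_nonneg (hoff i j (ne_of_mem_erase hj).symm) (hinv j i)
  nlinarith [hinv i i]

theorem abar_eq_one_sub_bbar (hA : IsNonsingMMatrix A) : Abar A = 1 - Bbar A := by
  ext i j
  by_cases h : i = j
  · subst h
    simp [Abar, Bbar, (hA.diag_pos i).ne']
  · simp [Abar, Bbar, h, neg_div]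

theorem bbar_nonneg (hA : IsNonsingMMatrix A) (i j : Fin n) : 0 ≤ Bbar A i j := by
  by_cases h : i = j
  · simp [Bbar, h]
  · simpa [Bbar, h] using div_nonneg (neg_nonneg.2 (hA.1 i j h)) (hA.diag_pos i).le

theorem det_abar_pos (hA : IsNonsingMMatrix A) : 0 < (Abar A).det := by
  -- `A⁻¹ D_A ≥ 0` is the inverse of `Ā = D_A⁻¹ A = 1 - B̄`
  have hAbar : Abar A = diagonal (fun i => (A i i)⁻¹) * A := by
    ext i j
    simp [Abar, diagonal_mul, div_eq_inv_mul]
  have hinv : A⁻¹ * diagonal (fun i => A i i) * Abar A = 1 := by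
    rw [hAbar, Matrix.mul_assoc, ← Matrix.mul_assoc (diagonal _), diagonal_mul_diagonal]
    simp [fun i => mul_inv_cancel₀ (hA.diag_pos i).ne', nonsing_inv_mul A hA.2.1]
  rw [hA.abar_eq_one_sub_bbar] at hinv ⊢
  refine det_one_sub_pos hA.bbar_nonneg (fun i j => ?_) hinv
  rw [mul_diagonal]
  exact mul_nonneg (hA.2.2 i j) (hA.diag_pos j).le

end IsNonsingMMatrix

theorem statement3_general {n : ℕ} (A : Matrix (Fin n) (Fin n) ℝ) (hA : IsNonsingMMatrix A)
    (α β : ℝ) (k : Fin n → ℕ) :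
    Zpmf (α + β) A k = ∑ k' ∈ Finset.Iic k, Zpmf α A k' * Zpmf β A (k - k') := by
  rw [Zpmf, apermK_add, mul_sum, sum_div]
  refine sum_congr rfl fun m hm => ?_
  have hchoose : ∏ i, ((k i).choose (m i) : ℝ) =
      (∏ i, ((k i).factorial : ℝ)) /
        ((∏ i, ((m i).factorial : ℝ)) * ∏ i, (((k - m) i).factorial : ℝ)) := by
    rw [← prod_mul_distrib, ← prod_div_distrib]
    exact prod_congr rfl fun i _ => Nat.cast_choose ℝ (mem_Iic.1 hm i)
  rw [Zpmf, Zpmf, Real.rpow_add hA.det_abar_pos, hchoose]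
  field_simp

/-- Infinite divisibility of `Z`: for `α, β > 0`, if `Z_{α,B̄}` and
`Z_{β,B̄}` are independent then `Z_{α,B̄} + Z_{β,B̄}` has the law of `Z_{α+β,B̄}`;
equivalently, for every `k ∈ ℕ^n`,
`P(Z_{α+β,B̄} = k) = Σ_{k' + k'' = k} P(Z_{α,B̄} = k') P(Z_{β,B̄} = k'')`. -/
theorem statement3 {n : ℕ} (A : Matrix (Fin n) (Fin n) ℝ) (hA : IsNonsingMMatrix A)
    (α β : ℝ) (hα : 0 < α) (hβ : 0 < β) (k : Fin n → ℕ) :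
    Zpmf (α + β) A k = ∑ k' ∈ Finset.Iic k, Zpmf α A k' * Zpmf β A (k - k') :=
  statement3_general A hA α β k
end

section
/- Let A be an n×n nonsingular M-matrix, written A = D_A − B with D_A = diag(a_1,…,a_n) and B ≥ 0 with zero diagonal, and let A_sym = D_A − S(B), where S(B) has entries (b_{i,j} b_{j,i})^{1/2}. Then A_sym and Ā_sym = D_A^{-1}A_sym are nonsingular M-matrices, and det(A_sym) ≥ det(A) and det(Ā_sym) ≥ det(Ā). -/
open MeasureTheory ProbabilityTheory Matrix

noncomputable section

/-- `A_sym = D_A - S(B)`: same diagonal as `A`, and off-diagonal entries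
`-(b_{i,j} b_{j,i})^{1/2} = -√(A i j * A j i)` (since `b_{i,j} = -A i j` for `i ≠ j`). -/
def Asym {n : ℕ} (A : Matrix (Fin n) (Fin n) ℝ) : Matrix (Fin n) (Fin n) ℝ :=
  Matrix.of fun i j => if i = j then A i j else -Real.sqrt (A i j * A j i)

end

/-! A Z-matrix `A` is a nonsingular M-matrix exactly when `A x > 0` for some `x > 0`. If `A x > 0`
and `Aᵀ y > 0`, the Cauchy–Schwarz inequality gives `A_sym z > 0` for `z = √(x y)`, so `A_sym` and
`D_A⁻¹ A_sym` are nonsingular M-matrices.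

For the determinants, eliminate the first row and column: `det A = a₁ · det (A / a₁)`, and the
Schur complement of `A_sym` dominates `(A / a₁)_sym` entrywise, since
`√(uv) + √(pq) ≤ √((u + p)(v + q))`. The determinant of an M-matrix can only grow when its
entries are raised within the Z-matrices, because it is affine in each row with the nonnegative
adjugate entries as coefficients; induction on the size gives `det A ≤ det A_sym`. Finally
`det Ā = det A / ∏ aᵢ`, and `A_sym` has the same diagonal as `A`.
-/

open Finset

section ZMatrix

variable {ι : Type*}

def IsZMatrix (A : Matrix ι ι ℝ) : Prop :=
  ∀ i j, i ≠ j → A i j ≤ 0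

variable [DecidableEq ι]

/-- The matrix `B` of the splitting `A = D_A - B`. -/
def offDiagNeg (A : Matrix ι ι ℝ) : Matrix ι ι ℝ :=
  of fun i j => if i = j then 0 else -A i j

lemma IsZMatrix.offDiagNeg_nonneg {A : Matrix ι ι ℝ} (hA : IsZMatrix A) (i j : ι) :
    0 ≤ offDiagNeg A i j := by
  by_cases hij : i = j
  · simp [offDiagNeg, hij]
  · simpa [offDiagNeg, hij] using hA i j hij

lemma offDiagNeg_transpose (A : Matrix ι ι ℝ) (i j : ι) :
    offDiagNeg Aᵀ i j = offDiagNeg A j i := by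
  simp [offDiagNeg, eq_comm]

variable [Fintype ι]

structure IsMCertificate (A : Matrix ι ι ℝ) (x : ι → ℝ) : Prop where
  isZMatrix : IsZMatrix A
  pos : ∀ i, 0 < x i
  mulVec_pos : ∀ i, 0 < (A *ᵥ x) i

lemma mulVec_apply_eq_diag_sub (A : Matrix ι ι ℝ) (x : ι → ℝ) (i : ι) :
    (A *ᵥ x) i = A i i * x i - ∑ j, offDiagNeg A i j * x j := by
  have hsplit : ∀ j, A i j * x j = (if i = j then A i i * x i else 0) - offDiagNeg A i j * x j := by
    intro j
    by_cases hij : i = j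
    · subst hij; simp [offDiagNeg]
    · simp [offDiagNeg, hij]
  rw [mulVec, dotProduct, sum_congr rfl fun j _ => hsplit j, sum_sub_distrib, sum_ite_eq,
    if_pos (mem_univ i)]

namespace IsMCertificate

variable {A : Matrix ι ι ℝ} {x : ι → ℝ}

lemma diag_pos (h : IsMCertificate A x) (i : ι) : 0 < A i i := by
  have hAx := h.mulVec_pos i
  rw [mulVec_apply_eq_diag_sub] at hAx
  have hB : 0 ≤ ∑ j, offDiagNeg A i j * x j :=
    sum_nonneg fun j _ => mul_nonneg (h.isZMatrix.offDiagNeg_nonneg i j) (h.pos j).le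
  exact pos_of_mul_pos_left (by linarith) (h.pos i).le

lemma nonneg_of_mulVec_nonneg (h : IsMCertificate A x) {y : ι → ℝ}
    (hy : ∀ i, 0 ≤ (A *ᵥ y) i) (i : ι) : 0 ≤ y i := by
  by_contra! hyi
  -- compare `y` with the largest multiple `c • x` lying below it
  obtain ⟨k, -, hk⟩ := exists_min_image univ (fun j => y j / x j) ⟨i, mem_univ i⟩
  set c := y k / x k
  have hc : c < 0 := (hk i (mem_univ i)).trans_lt (div_neg_of_neg_of_pos hyi (h.pos i))
  have hcx : ∀ j, c * x j ≤ y j := fun j => (le_div_iff₀ (h.pos j)).1 (hk j (mem_univ j))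
  have hyk : y k = c * x k := (div_mul_cancel₀ _ (h.pos k).ne').symm
  have hBy : c * ∑ j, offDiagNeg A k j * x j ≤ ∑ j, offDiagNeg A k j * y j := by
    rw [mul_sum]
    refine sum_le_sum fun j _ => ?_
    nlinarith [h.isZMatrix.offDiagNeg_nonneg k j, hcx j]
  have hle : (A *ᵥ y) k ≤ c * (A *ᵥ x) k := by
    rw [mulVec_apply_eq_diag_sub, mulVec_apply_eq_diag_sub, hyk]
    nlinarith
  nlinarith [hy k, h.mulVec_pos k]

end IsMCertificate

end ZMatrix

noncomputable def schurCompl {n : ℕ} (A : Matrix (Fin (n + 1)) (Fin (n + 1)) ℝ) :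
    Matrix (Fin n) (Fin n) ℝ :=
  of fun i j => A i.succ j.succ - A i.succ 0 * A 0 j.succ / A 0 0

section SchurComplement

variable {n : ℕ} {A : Matrix (Fin (n + 1)) (Fin (n + 1)) ℝ}

lemma det_eq_mul_det_schurCompl (ha : A 0 0 ≠ 0) : A.det = A 0 0 * (schurCompl A).det := by
  -- clear the first column by subtracting multiples of row `0`
  set c : Fin (n + 1) → ℝ := Fin.cons 0 fun i => -(A i.succ 0 / A 0 0)
  set A' : Matrix (Fin (n + 1)) (Fin (n + 1)) ℝ := of fun i j => A i j + c i * A 0 j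
  have hdet : A'.det = A.det :=
    det_eq_of_forall_row_eq_smul_add_const c 0 rfl fun _ _ => rfl
  have hcol : ∀ i : Fin n, A' i.succ 0 = 0 := fun i => by
    simp only [of_apply, Fin.cons_succ, neg_mul, A', c]
    field_simp
    ring
  have hsub : A'.submatrix Fin.succ Fin.succ = schurCompl A := by
    ext i j
    simp only [submatrix_apply, of_apply, Fin.cons_succ, neg_mul, schurCompl, A', c]
    ring
  rw [← hdet, det_succ_column_zero, Fin.sum_univ_succ]
  simp [hcol, hsub, A', c]

lemma IsZMatrix.schurCompl (hA : IsZMatrix A) (ha : 0 ≤ A 0 0) : IsZMatrix (schurCompl A) := by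
  intro i j hij
  have hprod : 0 ≤ A i.succ 0 * A 0 j.succ :=
    mul_nonneg_of_nonpos_of_nonpos (hA _ _ (Fin.succ_ne_zero i)) (hA _ _ (Fin.succ_ne_zero j).symm)
  have := hA _ _ (Fin.succ_injective _ |>.ne hij)
  have := div_nonneg hprod ha
  simp only [_root_.schurCompl, of_apply]
  linarith

lemma IsMCertificate.schurCompl {x : Fin (n + 1) → ℝ} (h : IsMCertificate A x) :
    IsMCertificate (_root_.schurCompl A) (Fin.tail x) := by
  have ha := h.diag_pos 0
  refine ⟨h.isZMatrix.schurCompl ha.le, fun i => h.pos i.succ, fun i => ?_⟩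
  have hrow : ∀ k, (A *ᵥ x) k = A k 0 * x 0 + ∑ j : Fin n, A k j.succ * x j.succ := fun k => by
    rw [mulVec, dotProduct, Fin.sum_univ_succ]
  have hS : (_root_.schurCompl A *ᵥ Fin.tail x) i
      = (A *ᵥ x) i.succ - A i.succ 0 / A 0 0 * (A *ᵥ x) 0 := by
    have hterm : ∀ j : Fin n, A i.succ 0 * A 0 j.succ / A 0 0 * x j.succ
        = A i.succ 0 / A 0 0 * (A 0 j.succ * x j.succ) := fun j => by ring
    have hpivot : A i.succ 0 / A 0 0 * (A 0 0 * x 0) = A i.succ 0 * x 0 := by field_simp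
    rw [hrow, hrow, mul_add, mul_sum, hpivot]
    simp only [mulVec, dotProduct, _root_.schurCompl, of_apply, Fin.tail, sub_mul,
      sum_sub_distrib, hterm]
    ring
  have hcoef : A i.succ 0 / A 0 0 ≤ 0 := div_nonpos_of_nonpos_of_nonneg
    (h.isZMatrix _ _ (Fin.succ_ne_zero i)) ha.le
  rw [hS]
  nlinarith [h.mulVec_pos i.succ, h.mulVec_pos 0]

end SchurComplement

namespace IsMCertificate

lemma det_pos_of_fin : ∀ {n : ℕ} {A : Matrix (Fin n) (Fin n) ℝ} {x : Fin n → ℝ},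
    IsMCertificate A x → 0 < A.det
  | 0, _, _, _ => by simp
  | _ + 1, _, _, h => by
    rw [det_eq_mul_det_schurCompl (h.diag_pos 0).ne']
    exact mul_pos (h.diag_pos 0) (det_pos_of_fin h.schurCompl)

variable {ι κ : Type*} [Fintype ι] [Fintype κ] {A : Matrix ι ι ℝ} {x : ι → ℝ}

lemma reindex (h : IsMCertificate A x) (e : ι ≃ κ) :
    IsMCertificate (Matrix.reindex e e A) (x ∘ e.symm) where
  isZMatrix i j hij := h.isZMatrix _ _ (e.symm.injective.ne hij)
  pos i := h.pos _
  mulVec_pos i := by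
    rw [reindex_apply, submatrix_mulVec_equiv]
    simpa [Function.comp_def] using h.mulVec_pos (e.symm i)

variable [DecidableEq ι]

lemma det_pos (h : IsMCertificate A x) : 0 < A.det := by
  rw [← det_reindex_self (Fintype.equivFin ι) A]
  exact det_pos_of_fin (h.reindex _)

lemma inv_nonneg (h : IsMCertificate A x) (i j : ι) : 0 ≤ A⁻¹ i j := by
  have hunit : IsUnit A.det := h.det_pos.ne'.isUnit
  refine h.nonneg_of_mulVec_nonneg (y := A⁻¹ *ᵥ Pi.single j 1) (fun k => ?_) i |>.trans_eq ?_
  · rw [mulVec_mulVec, mul_nonsing_inv _ hunit, one_mulVec, Pi.single_apply]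
    split_ifs <;> norm_num
  · simp

lemma adjugate_nonneg (h : IsMCertificate A x) (i j : ι) : 0 ≤ A.adjugate i j := by
  have := mul_nonneg h.det_pos.le (h.inv_nonneg i j)
  rwa [Matrix.inv_def, Ring.inverse_eq_inv', Matrix.smul_apply, smul_eq_mul,
    mul_inv_cancel_left₀ h.det_pos.ne'] at this

end IsMCertificate

section DetMonotone

variable {ι : Type*} [Fintype ι]

lemma IsMCertificate.of_le {P Q : Matrix ι ι ℝ} {x : ι → ℝ} (hP : IsMCertificate P x)
    (hQ : IsZMatrix Q) (hPQ : ∀ i j, P i j ≤ Q i j) : IsMCertificate Q x where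
  isZMatrix := hQ
  pos := hP.pos
  mulVec_pos i := (hP.mulVec_pos i).trans_le <|
    sum_le_sum fun j _ => mul_le_mul_of_nonneg_right (hPQ i j) (hP.pos j).le

variable [DecidableEq ι]

lemma Matrix.det_updateRow_eq_sum_mul_adjugate {R : Type*} [CommRing R] (X : Matrix ι ι R)
    (i : ι) (r : ι → R) : (X.updateRow i r).det = ∑ j, r j * X.adjugate j i := by
  rw [det_eq_sum_mul_adjugate_row _ i]
  refine sum_congr rfl fun j _ => ?_
  rw [updateRow_self, adjugate_apply, adjugate_apply, updateRow_idem]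

lemma IsMCertificate.det_le_det {P Q : Matrix ι ι ℝ} {x : ι → ℝ} (hP : IsMCertificate P x)
    (hQ : IsZMatrix Q) (hPQ : ∀ i j, P i j ≤ Q i j) : P.det ≤ Q.det := by
  -- replace the rows of `P` by those of `Q` one at a time
  let M : Finset ι → Matrix ι ι ℝ := fun s i => if i ∈ s then Q i else P i
  have hM : ∀ s, IsMCertificate (M s) x := fun s => by
    refine hP.of_le (fun i j hij => ?_) (fun i j => ?_) <;> dsimp only [M] <;> split_ifs
    exacts [hQ i j hij, hP.isZMatrix i j hij, hPQ i j, le_rfl]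
  have hstep : ∀ s, P.det ≤ (M s).det := by
    intro s
    induction s using Finset.induction_on with
    | empty => rfl
    | insert i s hi ih =>
      have hrow : M (insert i s) = (M s).updateRow i (Q i) := by
        funext k
        rcases eq_or_ne k i with rfl | hk
        · rw [updateRow_self]
          simp [M]
        · rw [updateRow_ne hk]
          simp [M, hk]
      refine ih.trans ?_
      rw [hrow, ← (M s).updateRow_eq_self i, updateRow_idem,
        det_updateRow_eq_sum_mul_adjugate, det_updateRow_eq_sum_mul_adjugate]
      refine sum_le_sum fun j _ => mul_le_mul_of_nonneg_right ?_ ((hM s).adjugate_nonneg j i)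
      simp [M, hi, hPQ i j]
  simpa [M] using hstep univ

end DetMonotone

section MMatrix

variable {n : ℕ} {A : Matrix (Fin n) (Fin n) ℝ}

lemma IsMCertificate.isNonsingMMatrix {x : Fin n → ℝ} (h : IsMCertificate A x) :
    IsNonsingMMatrix A :=
  ⟨h.isZMatrix, h.det_pos.ne'.isUnit, h.inv_nonneg⟩

namespace IsNonsingMMatrix

lemma exists_isMCertificate (hA : IsNonsingMMatrix A) : ∃ x, IsMCertificate A x := by
  obtain ⟨hZ, hunit, hinv⟩ : IsZMatrix A ∧ _ := hA
  set x := A⁻¹ *ᵥ fun _ => 1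
  have hAx : A *ᵥ x = fun _ => 1 := by
    rw [mulVec_mulVec, mul_nonsing_inv _ hunit, one_mulVec]
  have hx : ∀ i, 0 ≤ x i := fun i => by
    simp only [x, mulVec, dotProduct, mul_one]
    exact sum_nonneg fun j _ => hinv i j
  refine ⟨x, hZ, fun i => (hx i).lt_of_ne fun hxi => ?_, fun i => by simp [hAx]⟩
  -- `1 = (A x)_i ≤ A i i * x i = 0`
  have hrow := congr_fun hAx i
  rw [mulVec_apply_eq_diag_sub, ← hxi, mul_zero] at hrow
  have := sum_nonneg fun j (_ : j ∈ univ) => mul_nonneg (hZ.offDiagNeg_nonneg i j) (hx j)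
  linarith

lemma transpose (hA : IsNonsingMMatrix A) : IsNonsingMMatrix Aᵀ :=
  ⟨fun i j hij => hA.1 j i hij.symm, by rw [det_transpose]; exact hA.2.1,
    fun i j => by rw [← transpose_nonsing_inv]; exact hA.2.2 j i⟩

end IsNonsingMMatrix

end MMatrix

section Asym

variable {n : ℕ} {A : Matrix (Fin n) (Fin n) ℝ}

lemma asym_apply_self (A : Matrix (Fin n) (Fin n) ℝ) (i : Fin n) : Asym A i i = A i i :=
  if_pos rfl

lemma asym_apply_of_ne (A : Matrix (Fin n) (Fin n) ℝ) {i j : Fin n} (hij : i ≠ j) :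
    Asym A i j = -√(A i j * A j i) :=
  if_neg hij

lemma offDiagNeg_asym (A : Matrix (Fin n) (Fin n) ℝ) (i j : Fin n) :
    offDiagNeg (Asym A) i j = √(offDiagNeg A i j * offDiagNeg A j i) := by
  rcases eq_or_ne i j with rfl | hij
  · simp [offDiagNeg]
  · simp [offDiagNeg, asym_apply_of_ne A hij, hij, hij.symm]

lemma isZMatrix_asym (A : Matrix (Fin n) (Fin n) ℝ) : IsZMatrix (Asym A) := fun i j hij => by
  rw [asym_apply_of_ne A hij, neg_nonpos]
  exact Real.sqrt_nonneg _

lemma IsMCertificate.asym {x y : Fin n → ℝ} (hx : IsMCertificate A x)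
    (hy : IsMCertificate Aᵀ y) : IsMCertificate (Asym A) fun i => √(x i * y i) := by
  refine ⟨isZMatrix_asym A, fun i => Real.sqrt_pos.2 (mul_pos (hx.pos i) (hy.pos i)), fun i => ?_⟩
  have hB := hx.isZMatrix.offDiagNeg_nonneg
  set a := A i i
  have ha : 0 < a := hx.diag_pos i
  set p := ∑ j, offDiagNeg A i j * x j
  set q := ∑ j, offDiagNeg A j i * y j
  have hp : 0 ≤ p := sum_nonneg fun j _ => mul_nonneg (hB i j) (hx.pos j).le
  have hq : 0 ≤ q := sum_nonneg fun j _ => mul_nonneg (hB j i) (hy.pos j).le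
  have hpa : p < a * x i := by
    have := hx.mulVec_pos i
    rw [mulVec_apply_eq_diag_sub] at this
    linarith
  have hqa : q < a * y i := by
    have := hy.mulVec_pos i
    simp only [mulVec_apply_eq_diag_sub, offDiagNeg_transpose, transpose_apply] at this
    linarith
  have hterm : ∀ j, offDiagNeg (Asym A) i j * √(x j * y j)
      = √(offDiagNeg A i j * x j) * √(offDiagNeg A j i * y j) := fun j => by
    rw [offDiagNeg_asym, ← Real.sqrt_mul (mul_nonneg (hB i j) (hB j i)),
      ← Real.sqrt_mul (mul_nonneg (hB i j) (hx.pos j).le)]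
    ring_nf
  have hdiag : √(a * x i) * √(a * y i) = a * √(x i * y i) := by
    rw [← Real.sqrt_mul (mul_nonneg ha.le (hx.pos i).le), mul_mul_mul_comm,
      Real.sqrt_mul (mul_self_nonneg a), Real.sqrt_mul_self ha.le]
  have hoff : ∑ j, offDiagNeg (Asym A) i j * √(x j * y j) < a * √(x i * y i) :=
    calc ∑ j, offDiagNeg (Asym A) i j * √(x j * y j)
        = ∑ j, √(offDiagNeg A i j * x j) * √(offDiagNeg A j i * y j) :=
          sum_congr rfl fun j _ => hterm j
      _ ≤ √p * √q := Real.sum_sqrt_mul_sqrt_le _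
          (fun j => mul_nonneg (hB i j) (hx.pos j).le) (fun j => mul_nonneg (hB j i) (hy.pos j).le)
      _ < √(a * x i) * √(a * y i) :=
          mul_lt_mul'' (Real.sqrt_lt_sqrt hp hpa) (Real.sqrt_lt_sqrt hq hqa)
            (Real.sqrt_nonneg _) (Real.sqrt_nonneg _)
      _ = a * √(x i * y i) := hdiag
  rw [mulVec_apply_eq_diag_sub, asym_apply_self]
  linarith

lemma IsNonsingMMatrix.exists_isMCertificate_asym (hA : IsNonsingMMatrix A) :
    ∃ z, IsMCertificate (Asym A) z := by
  obtain ⟨x, hx⟩ := hA.exists_isMCertificate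
  obtain ⟨y, hy⟩ := hA.transpose.exists_isMCertificate
  exact ⟨_, hx.asym hy⟩

end Asym

lemma Real.sqrt_mul_add_sqrt_mul_le {u v p q : ℝ} (hu : 0 ≤ u) (hv : 0 ≤ v) (hp : 0 ≤ p)
    (hq : 0 ≤ q) : √(u * v) + √(p * q) ≤ √((u + p) * (v + q)) := by
  have := Real.sum_sqrt_mul_sqrt_le univ (f := ![u, p]) (g := ![v, q])
    (by simp [Fin.forall_fin_two, hu, hp]) (by simp [Fin.forall_fin_two, hv, hq])
  simp only [Fin.sum_univ_two, cons_val_zero, cons_val_one] at this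
  rwa [Real.sqrt_mul hu, Real.sqrt_mul hp, Real.sqrt_mul (add_nonneg hu hp)]

section AsymSchur

variable {n : ℕ} {A : Matrix (Fin (n + 1)) (Fin (n + 1)) ℝ}

lemma asym_schurCompl_le (hA : IsZMatrix A) (ha : 0 < A 0 0) (i j : Fin n) :
    Asym (schurCompl A) i j ≤ schurCompl (Asym A) i j := by
  have h0 : ∀ k : Fin n, A k.succ 0 ≤ 0 ∧ A 0 k.succ ≤ 0 := fun k =>
    ⟨hA _ _ (Fin.succ_ne_zero k), hA _ _ (Fin.succ_ne_zero k).symm⟩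
  rcases eq_or_ne i j with rfl | hij
  · have hprod : 0 ≤ A i.succ 0 * A 0 i.succ := mul_nonneg_of_nonpos_of_nonpos (h0 i).1 (h0 i).2
    simp only [schurCompl, of_apply, asym_apply_self,
      asym_apply_of_ne A (Fin.succ_ne_zero i), asym_apply_of_ne A (Fin.succ_ne_zero i).symm,
      neg_mul_neg, mul_comm (A 0 i.succ), Real.mul_self_sqrt hprod, le_refl]
  have hij' : i.succ ≠ j.succ := Fin.succ_injective _ |>.ne hij
  have hpq : √(A i.succ 0 * A 0 j.succ / A 0 0 * (A j.succ 0 * A 0 i.succ / A 0 0))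
      = √(A i.succ 0 * A 0 i.succ) * √(A 0 j.succ * A j.succ 0) / A 0 0 := by
    rw [show A i.succ 0 * A 0 j.succ / A 0 0 * (A j.succ 0 * A 0 i.succ / A 0 0)
        = A i.succ 0 * A 0 i.succ * (A 0 j.succ * A j.succ 0) / A 0 0 ^ 2 by ring,
      Real.sqrt_div' _ (sq_nonneg _), Real.sqrt_sq ha.le, Real.sqrt_mul]
    exact mul_nonneg_of_nonpos_of_nonpos (h0 i).1 (h0 i).2
  have key := Real.sqrt_mul_add_sqrt_mul_le (neg_nonneg.2 (hA _ _ hij'))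
    (neg_nonneg.2 (hA _ _ hij'.symm))
    (div_nonneg (mul_nonneg_of_nonpos_of_nonpos (h0 i).1 (h0 j).2) ha.le)
    (div_nonneg (mul_nonneg_of_nonpos_of_nonpos (h0 j).1 (h0 i).2) ha.le)
  rw [neg_mul_neg, hpq] at key
  rw [asym_apply_of_ne _ hij]
  simp only [schurCompl, of_apply, asym_apply_self, asym_apply_of_ne A hij',
    asym_apply_of_ne A (Fin.succ_ne_zero i), asym_apply_of_ne A (Fin.succ_ne_zero j).symm,
    neg_mul_neg]
  rw [← neg_mul_neg, neg_sub', neg_sub', sub_neg_eq_add, sub_neg_eq_add]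
  linarith

end AsymSchur

lemma IsNonsingMMatrix.det_le_det_asym : ∀ {n : ℕ} {A : Matrix (Fin n) (Fin n) ℝ},
    IsNonsingMMatrix A → A.det ≤ (Asym A).det
  | 0, _, _ => by simp
  | _ + 1, A, hA => by
    obtain ⟨x, hx⟩ := hA.exists_isMCertificate
    have ha := hx.diag_pos 0
    have hS : IsNonsingMMatrix (schurCompl A) := hx.schurCompl.isNonsingMMatrix
    obtain ⟨z, hz⟩ := hS.exists_isMCertificate_asym
    have ha' : 0 < Asym A 0 0 := by rwa [asym_apply_self]
    have hT : IsZMatrix (schurCompl (Asym A)) := (isZMatrix_asym A).schurCompl ha'.le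
    calc A.det = A 0 0 * (schurCompl A).det := det_eq_mul_det_schurCompl ha.ne'
      _ ≤ A 0 0 * (schurCompl (Asym A)).det := by
        refine mul_le_mul_of_nonneg_left ((det_le_det_asym hS).trans ?_) ha.le
        exact hz.det_le_det hT (asym_schurCompl_le hx.isZMatrix ha)
      _ = (Asym A).det := by rw [det_eq_mul_det_schurCompl ha'.ne', asym_apply_self]

section Abar

variable {n : ℕ}

lemma abar_eq_diagonal_mul (A : Matrix (Fin n) (Fin n) ℝ) :
    Abar A = diagonal (fun i => (A i i)⁻¹) * A := by
  ext i j
  simp [Abar, diagonal_mul, div_eq_inv_mul]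

lemma det_abar (A : Matrix (Fin n) (Fin n) ℝ) : (Abar A).det = (∏ i, (A i i)⁻¹) * A.det := by
  rw [abar_eq_diagonal_mul, det_mul, det_diagonal]

lemma IsMCertificate.abar {A : Matrix (Fin n) (Fin n) ℝ} {x : Fin n → ℝ}
    (h : IsMCertificate A x) : IsMCertificate (Abar A) x where
  isZMatrix i j hij := div_nonpos_of_nonpos_of_nonneg (h.isZMatrix i j hij) (h.diag_pos i).le
  pos := h.pos
  mulVec_pos i := by
    rw [abar_eq_diagonal_mul, ← mulVec_mulVec, mulVec_diagonal]
    exact mul_pos (inv_pos.2 (h.diag_pos i)) (h.mulVec_pos i)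

end Abar

/-- Lemma 3.3. For a nonsingular M-matrix `A`, the matrices
`A_sym = D_A - S(B)` and `Ā_sym = D_A⁻¹ A_sym` are nonsingular M-matrices, and
`det(A_sym) ≥ det(A)`, `det(Ā_sym) ≥ det(Ā)`. -/
theorem statement15 {n : ℕ} (A : Matrix (Fin n) (Fin n) ℝ) (hA : IsNonsingMMatrix A) :
    IsNonsingMMatrix (Asym A) ∧ IsNonsingMMatrix (Abar (Asym A)) ∧
      A.det ≤ (Asym A).det ∧ (Abar A).det ≤ (Abar (Asym A)).det := by
  obtain ⟨x, hx⟩ := hA.exists_isMCertificate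
  obtain ⟨z, hz⟩ := hA.exists_isMCertificate_asym
  have hdet := hA.det_le_det_asym
  refine ⟨hz.isNonsingMMatrix, hz.abar.isNonsingMMatrix, hdet, ?_⟩
  simp only [det_abar, asym_apply_self]
  exact mul_le_mul_of_nonneg_left hdet (prod_nonneg fun i _ => inv_nonneg.2 (hx.diag_pos i).le)
end

section
/- Let C be an n×n matrix with nonnegative entries c_{i,j}, and let S(C) be the matrix with entries (c_{i,j} c_{j,i})^{1/2}. Then for every α > 0, |S(C)|_α ≤ |C|_α, and moreover |S(C)(k)|_α ≤ |C(k)|_α for every k ∈ ℕ^n. -/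
open MeasureTheory ProbabilityTheory Matrix

lemma prod_sqrt_eq {ι : Type*} (s : Finset ι) (f : ι → ℝ) (hf : ∀ i ∈ s, 0 ≤ f i) :
    ∏ i ∈ s, Real.sqrt (f i) = Real.sqrt (∏ i ∈ s, f i) := by
  induction s using Finset.cons_induction with
  | empty => simp
  | cons a s ha ih =>
    rw [Finset.prod_cons, Finset.prod_cons, ih (fun i hi => hf i (Finset.mem_cons_of_mem hi)),
      Real.sqrt_mul (hf a (Finset.mem_cons_self a s))]

lemma numCycles_inv {β : Type*} [Fintype β] [DecidableEq β] (π : Equiv.Perm β) :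
    numCycles π⁻¹ = numCycles π := by
  unfold numCycles
  rw [Equiv.Perm.cycleType_inv]
  congr 1
  congr 1
  ext i
  simp only [Finset.mem_filter, Finset.mem_univ, true_and]
  constructor
  · intro h; nth_rewrite 1 [← h]; simp
  · intro h; nth_rewrite 1 [← h]; simp

lemma aperm_sqrt_le {β : Type*} [Fintype β] [DecidableEq β] {α : ℝ} (hα : 0 ≤ α)
    (M : Matrix β β ℝ) (hM : ∀ i j, 0 ≤ M i j) :
    aperm α (Matrix.of fun i j => Real.sqrt (M i j * M j i)) ≤ aperm α M := by
  have hprodinv : ∀ π : Equiv.Perm β, ∏ i, M (π i) i = ∏ i, M i (π⁻¹ i) := by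
    intro π
    have := Equiv.prod_comp π (fun i => M i (π⁻¹ i))
    simpa using this
  have key : ∀ π : Equiv.Perm β,
      ∏ i, Real.sqrt (M i (π i) * M (π i) i)
        ≤ ((∏ i, M i (π i)) + ∏ i, M i (π⁻¹ i)) / 2 := by
    intro π
    have h1 : ∏ i, Real.sqrt (M i (π i) * M (π i) i)
        = Real.sqrt ((∏ i, M i (π i)) * ∏ i, M i (π⁻¹ i)) := by
      rw [prod_sqrt_eq _ _ (fun i _ => mul_nonneg (hM _ _) (hM _ _)),
        Finset.prod_mul_distrib, hprodinv]
    rw [h1]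
    set P := ∏ i, M i (π i) with hP
    set Q := ∏ i, M i (π⁻¹ i) with hQ
    have hPn : 0 ≤ P := Finset.prod_nonneg fun i _ => hM _ _
    have hQn : 0 ≤ Q := Finset.prod_nonneg fun i _ => hM _ _
    have h2 : Real.sqrt (P * Q) = Real.sqrt P * Real.sqrt Q := Real.sqrt_mul hPn Q
    nlinarith [Real.sq_sqrt hPn, Real.sq_sqrt hQn,
      sq_nonneg (Real.sqrt P - Real.sqrt Q)]
  unfold aperm
  calc ∑ π : Equiv.Perm β, α ^ numCycles π *
        ∏ i, (Matrix.of fun i j => Real.sqrt (M i j * M j i)) i (π i)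
      ≤ ∑ π : Equiv.Perm β, α ^ numCycles π *
        (((∏ i, M i (π i)) + ∏ i, M i (π⁻¹ i)) / 2) := by
        apply Finset.sum_le_sum
        intro π _
        exact mul_le_mul_of_nonneg_left (key π) (pow_nonneg hα _)
    _ = ∑ π : Equiv.Perm β, α ^ numCycles π * ∏ i, M i (π i) := by
        have hswap : ∑ π : Equiv.Perm β, α ^ numCycles π * ∏ i, M i (π⁻¹ i)
            = ∑ π : Equiv.Perm β, α ^ numCycles π * ∏ i, M i (π i) := by
          refine Fintype.sum_equiv (Equiv.inv (Equiv.Perm β)) _ _ fun π => ?_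
          simp [Equiv.inv_apply, numCycles_inv]
        have expand : ∀ π : Equiv.Perm β,
            α ^ numCycles π * ((∏ i, M i (π i) + ∏ i, M i (π⁻¹ i)) / 2)
            = (α ^ numCycles π * ∏ i, M i (π i)) / 2
              + (α ^ numCycles π * ∏ i, M i (π⁻¹ i)) / 2 := fun π => by ring
        simp_rw [expand]
        rw [Finset.sum_add_distrib, ← Finset.sum_div, ← Finset.sum_div, hswap]
        ring
/-- Lemma 3.4. For a nonnegative matrix `C` and `α > 0`,
`|S(C)|_α ≤ |C|_α` and `|S(C)(k)|_α ≤ |C(k)|_α` for every `k ∈ ℕ^n`,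
where `S(C)_{i,j} = (c_{i,j} c_{j,i})^{1/2}`. -/
theorem statement16 {n : ℕ} (C : Matrix (Fin n) (Fin n) ℝ) (hC : ∀ i j, 0 ≤ C i j)
    (α : ℝ) (hα : 0 < α) :
    aperm α (Matrix.of fun i j => Real.sqrt (C i j * C j i)) ≤ aperm α C ∧
      ∀ k : Fin n → ℕ,
        apermK α (Matrix.of fun i j => Real.sqrt (C i j * C j i)) k ≤ apermK α C k := by
  refine ⟨aperm_sqrt_le hα.le C hC, fun k => ?_⟩
  exact aperm_sqrt_le hα.le (Matrix.of fun p q : Σ i : Fin n, Fin (k i) => C p.1 q.1)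
    (fun p q => hC _ _)
end
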